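/- If m ≥ 3, then γ(Φ(X1X2⋯Xm)) = −(m−1)·β(Φ(X1X2⋯Xm)) in Sym^m(H) for all X1, …, Xm ∈ H. -/
import Mathlib


noncomputable section

variable {H : Type*} [AddCommGroup H] [Module ℚ H]

/-- The pure tensor `X1 ⊗ ⋯ ⊗ Xm`, as the element `ι(X1)⋯ι(Xm)` of the
tensor algebra `T(H)`. -/
def word (l : List H) : TensorAlgebra ℚ H :=
  (l.map fun x => TensorAlgebra.ι ℚ x).prod

/-- The Dynkin map `Φ(X1 X2 ⋯ Xm) = [X1,[X2,[⋯,[X_{m−1},Xm]⋯]]]`, with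
`[a,b] := ab − ba` the commutator in `T(H)` and `Φ(X1) = X1`. -/
def dynkin : List H → TensorAlgebra ℚ H
  | [] => 0
  | [x] => TensorAlgebra.ι ℚ x
  | x :: y :: l =>
      TensorAlgebra.ι ℚ x * dynkin (y :: l) - dynkin (y :: l) * TensorAlgebra.ι ℚ x

variable {A : Type*} [CommRing A] [Algebra ℚ A]

/-- The monomial `X1 X2 ⋯ Xm` in the symmetric algebra `Sym(H)`, modelled by a
commutative `ℚ`-algebra `A` equipped with a linear map `σ : H → A`. -/
def symword (σ : H →ₗ[ℚ] A) (l : List H) : A := (l.map fun x => σ x).prod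

/-- `β = β_{Y,Z} : H^{⊗m} → Sym^m(H)` (for every `m ≥ 2` simultaneously) is the
linear map determined on pure tensors by
`β(X1⋯Xm) = −(Y·X1)·Z X2⋯Xm − (Y·Xm)·Z X1⋯X_{m−1} + (Z·X1)·Y X2⋯Xm + (Z·Xm)·Y X1⋯X_{m−1}`. -/
def IsBeta (ω : H →ₗ[ℚ] H →ₗ[ℚ] ℚ) (σ : H →ₗ[ℚ] A) (Y Z : H)
    (β : TensorAlgebra ℚ H →ₗ[ℚ] A) : Prop :=
  ∀ (x z : H) (mid : List H),
    β (word (x :: (mid ++ [z]))) =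
      -((ω Y x) • (σ Z * symword σ (mid ++ [z])))
        - (ω Y z) • (σ Z * symword σ (x :: mid))
        + (ω Z x) • (σ Y * symword σ (mid ++ [z]))
        + (ω Z z) • (σ Y * symword σ (x :: mid))

/-- `γ = γ_{Y,Z} : H^{⊗m} → Sym^m(H)` (for every `m ≥ 3` simultaneously) is the
linear map determined on pure tensors by
`γ(X1⋯Xm) = −(Y·X2)·Z X1X3⋯Xm − (Y·X_{m−1})·Z X1⋯X_{m−2}Xm + (Z·X2)·Y X1X3⋯Xm + (Z·X_{m−1})·Y X1⋯X_{m−2}Xm`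
(for `m = 3` the positions `2` and `m−1` coincide, so the corresponding terms add up). -/
def IsGamma (ω : H →ₗ[ℚ] H →ₗ[ℚ] ℚ) (σ : H →ₗ[ℚ] A) (Y Z : H)
    (γ : TensorAlgebra ℚ H →ₗ[ℚ] A) : Prop :=
  (∀ a b c : H,
    γ (word [a, b, c]) =
      -((ω Y b) • (σ Z * symword σ [a, c]))
        - (ω Y b) • (σ Z * symword σ [a, c])
        + (ω Z b) • (σ Y * symword σ [a, c])
        + (ω Z b) • (σ Y * symword σ [a, c])) ∧
  (∀ (a b : H) (mid : List H) (c d : H),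
    γ (word (a :: b :: (mid ++ [c, d]))) =
      -((ω Y b) • (σ Z * symword σ (a :: (mid ++ [c, d]))))
        - (ω Y c) • (σ Z * symword σ (a :: b :: (mid ++ [d])))
        + (ω Z b) • (σ Y * symword σ (a :: (mid ++ [c, d])))
        + (ω Z c) • (σ Y * symword σ (a :: b :: (mid ++ [d]))))

-- ===================== auxiliary machinery for stmt10 =====================
section Stmt10Aux

lemma st10sum_add {α M : Type*} [AddCommMonoid M] (E : List α) (f g : α → M) :
    (E.map fun a => f a + g a).sum = (E.map f).sum + (E.map g).sum := by
  induction E with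
  | nil => simp
  | cons a t ih => simp only [List.map_cons, List.sum_cons, ih]; abel

lemma st10sum_neg {α M : Type*} [AddCommGroup M] (E : List α) (f : α → M) :
    (E.map fun a => -f a).sum = -(E.map f).sum := by
  induction E with
  | nil => simp
  | cons a t ih => simp only [List.map_cons, List.sum_cons, ih]; abel

lemma st10sum_smul {α M : Type*} [AddCommMonoid M] [Module ℚ M] (E : List α)
    (f : α → ℚ) (c : M) :
    (E.map fun a => f a • c).sum = (E.map f).sum • c := by
  induction E with
  | nil => simp
  | cons a t ih => simp only [List.map_cons, List.sum_cons, ih, add_smul]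

/-- signed-word expansion of the Dynkin element -/
def st10expn : List H → List (ℚ × List H)
  | [] => []
  | [x] => [(1, [x])]
  | x :: y :: l =>
      ((st10expn (y :: l)).map fun p => (p.1, x :: p.2)) ++
      ((st10expn (y :: l)).map fun p => (-p.1, p.2 ++ [x]))

lemma st10word_cons (x : H) (w : List H) :
    word (x :: w) = TensorAlgebra.ι ℚ x * word w := by
  simp [word]

lemma st10word_concat (w : List H) (x : H) :
    word (w ++ [x]) = word w * TensorAlgebra.ι ℚ x := by
  simp [word]

lemma st10dynkin_eq (l : List H) :
    dynkin l = ((st10expn l).map fun p => p.1 • word p.2).sum := by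
  induction l using st10expn.induct with
  | case1 => simp [dynkin, st10expn]
  | case2 x => simp [dynkin, st10expn, word]
  | case3 x y t ih =>
    have h1 : dynkin (x :: y :: t)
        = TensorAlgebra.ι ℚ x * dynkin (y :: t) - dynkin (y :: t) * TensorAlgebra.ι ℚ x := rfl
    have h2 : st10expn (x :: y :: t)
        = ((st10expn (y :: t)).map fun p => (p.1, x :: p.2)) ++
          ((st10expn (y :: t)).map fun p => (-p.1, p.2 ++ [x])) := rfl
    rw [h1, h2, ih]
    rw [List.map_append, List.map_map, List.map_map, List.sum_append]
    have e1 : ((st10expn (y :: t)).map ((fun p : ℚ × List H => p.1 • word p.2) ∘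
        (fun p : ℚ × List H => (p.1, x :: p.2)))).sum
        = TensorAlgebra.ι ℚ x * ((st10expn (y :: t)).map fun p => p.1 • word p.2).sum := by
      rw [← List.sum_map_mul_left]
      apply congrArg List.sum
      apply List.map_congr_left
      intro p _
      simp [Function.comp, st10word_cons, mul_smul_comm]
    have e2 : ((st10expn (y :: t)).map ((fun p : ℚ × List H => p.1 • word p.2) ∘
        (fun p : ℚ × List H => (-p.1, p.2 ++ [x])))).sum
        = -(((st10expn (y :: t)).map fun p => p.1 • word p.2).sum * TensorAlgebra.ι ℚ x) := by
      rw [← List.sum_map_mul_right, ← st10sum_neg]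
      apply congrArg List.sum
      apply List.map_congr_left
      intro p _
      simp [Function.comp, st10word_concat, smul_mul_assoc]
    rw [e1, e2, sub_eq_add_neg]

lemma st10expn_perm (l : List H) : ∀ p ∈ st10expn l, p.2.Perm l := by
  induction l using st10expn.induct with
  | case1 => simp [st10expn]
  | case2 x => simp [st10expn]
  | case3 x y t ih =>
    intro p hp
    have h2 : st10expn (x :: y :: t)
        = ((st10expn (y :: t)).map fun p => (p.1, x :: p.2)) ++
          ((st10expn (y :: t)).map fun p => (-p.1, p.2 ++ [x])) := rfl
    rw [h2] at hp
    simp only [List.mem_append, List.mem_map] at hp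
    rcases hp with ⟨q, hq, rfl⟩ | ⟨q, hq, rfl⟩
    · exact (ih q hq).cons x
    · exact (List.perm_append_singleton x q.2).trans ((ih q hq).cons x)

lemma st10expn_fst (x y : H) (t : List H) :
    ((st10expn (x :: y :: t)).map Prod.fst).sum = 0 := by
  have h2 : st10expn (x :: y :: t)
      = ((st10expn (y :: t)).map fun p => (p.1, x :: p.2)) ++
        ((st10expn (y :: t)).map fun p => (-p.1, p.2 ++ [x])) := rfl
  rw [h2, List.map_append, List.map_map, List.map_map, List.sum_append]
  have e1 : (Prod.fst ∘ fun p : ℚ × List H => (p.1, x :: p.2)) = Prod.fst := rfl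
  have e2 : (Prod.fst ∘ fun p : ℚ × List H => (-p.1, p.2 ++ [x]))
      = fun p : ℚ × List H => -(Prod.fst p) := rfl
  rw [e1, e2, st10sum_neg, add_neg_cancel]

section WithMaps

variable (ω : H →ₗ[ℚ] H →ₗ[ℚ] ℚ) (σ : H →ₗ[ℚ] A) (Y Z : H)

lemma st10symword_nil : symword σ ([] : List H) = 1 := rfl

lemma st10symword_cons (x : H) (w : List H) :
    symword σ (x :: w) = σ x * symword σ w := by simp [symword]

lemma st10symword_append (u v : List H) :
    symword σ (u ++ v) = symword σ u * symword σ v := by simp [symword]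

lemma st10symword_reverse (w : List H) : symword σ w.reverse = symword σ w := by
  simp [symword, List.map_reverse, List.prod_reverse]

lemma st10symword_perm {u v : List H} (h : u.Perm v) : symword σ u = symword σ v :=
  List.Perm.prod_eq (h.map _)

/-- value of head-type contribution -/
def st10g (x : H) : A := -((ω Y x) • σ Z) + (ω Z x) • σ Y

def st10f : List H → A
  | [] => 0
  | x :: w => st10g ω σ Y Z x * symword σ w

def st10s : List H → A
  | [] => 0
  | x :: w => σ x * st10f ω σ Y Z w

def st10l (w : List H) : A := st10f ω σ Y Z w.reverse

def st10t (w : List H) : A := st10s ω σ Y Z w.reverse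

lemma st10f_cons (x : H) (w : List H) :
    st10f ω σ Y Z (x :: w) = st10g ω σ Y Z x * symword σ w := rfl

lemma st10s_cons (x : H) (w : List H) :
    st10s ω σ Y Z (x :: w) = σ x * st10f ω σ Y Z w := rfl

lemma st10f_concat (w : List H) (hw : w ≠ []) (x : H) :
    st10f ω σ Y Z (w ++ [x]) = σ x * st10f ω σ Y Z w := by
  rcases w with _ | ⟨a, t⟩
  · exact absurd rfl hw
  · rw [List.cons_append, st10f_cons, st10f_cons, st10symword_append]
    simp [st10symword_cons, st10symword_nil]
    ring

lemma st10l_cons (x : H) (w : List H) (hw : w ≠ []) :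
    st10l ω σ Y Z (x :: w) = σ x * st10l ω σ Y Z w := by
  unfold st10l
  rw [List.reverse_cons, st10f_concat]
  simpa using hw

lemma st10l_concat (w : List H) (x : H) :
    st10l ω σ Y Z (w ++ [x]) = st10g ω σ Y Z x * symword σ w := by
  unfold st10l
  rw [List.reverse_append]
  simp only [List.reverse_singleton, List.singleton_append, st10f_cons, st10symword_reverse]

lemma st10s_concat (w : List H) (hw : 2 ≤ w.length) (x : H) :
    st10s ω σ Y Z (w ++ [x]) = σ x * st10s ω σ Y Z w := by
  rcases w with _ | ⟨a, t⟩
  · simp at hw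
  · have ht : t ≠ [] := by
      rintro rfl; simp at hw
    rw [List.cons_append, st10s_cons, st10s_cons, st10f_concat _ _ _ _ t ht]
    ring

lemma st10t_cons (x : H) (w : List H) (hw : 2 ≤ w.length) :
    st10t ω σ Y Z (x :: w) = σ x * st10t ω σ Y Z w := by
  unfold st10t
  rw [List.reverse_cons, st10s_concat]
  simpa using hw

lemma st10t_concat (w : List H) (x : H) :
    st10t ω σ Y Z (w ++ [x]) = σ x * st10l ω σ Y Z w := by
  unfold st10t st10l
  rw [List.reverse_append]
  simp only [List.reverse_singleton, List.singleton_append, st10s_cons]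

end WithMaps

end Stmt10Aux

section Stmt10Aux2

set_option linter.unusedSectionVars false

variable (ω : H →ₗ[ℚ] H →ₗ[ℚ] ℚ) (σ : H →ₗ[ℚ] A) (Y Z : H)

lemma st10beta_word (β : TensorAlgebra ℚ H →ₗ[ℚ] A) (hβ : IsBeta ω σ Y Z β)
    (w : List H) (hw : 2 ≤ w.length) :
    β (word w) = st10f ω σ Y Z w + st10l ω σ Y Z w := by
  rcases w with _ | ⟨x, t⟩
  · simp at hw
  rcases t.eq_nil_or_concat with rfl | ⟨mid, z, rfl⟩
  · simp at hw
  rw [List.concat_eq_append, hβ x z mid]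
  have h1 : st10f ω σ Y Z (x :: (mid ++ [z]))
      = st10g ω σ Y Z x * symword σ (mid ++ [z]) := rfl
  have h2 : st10l ω σ Y Z (x :: (mid ++ [z]))
      = st10g ω σ Y Z z * symword σ (x :: mid) := by
    rw [show x :: (mid ++ [z]) = (x :: mid) ++ [z] by simp]
    exact st10l_concat ω σ Y Z (x :: mid) z
  rw [h1, h2]
  unfold st10g
  simp only [smul_mul_assoc, sub_eq_add_neg, neg_smul, neg_mul, add_mul, neg_neg]
  ring_nf

lemma st10gamma_word (γ : TensorAlgebra ℚ H →ₗ[ℚ] A) (hγ : IsGamma ω σ Y Z γ)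
    (w : List H) (hw : 3 ≤ w.length) :
    γ (word w) = st10s ω σ Y Z w + st10t ω σ Y Z w := by
  rcases w with _ | ⟨a, w⟩
  · simp at hw
  rcases w with _ | ⟨b, w⟩
  · simp at hw
  rcases w.eq_nil_or_concat with rfl | ⟨m1, d, rfl⟩
  · simp at hw
  rw [List.concat_eq_append]
  rcases m1.eq_nil_or_concat with rfl | ⟨mid, c, rfl⟩
  · -- w = [a, b, d]
    rw [List.nil_append, hγ.1 a b d]
    have h1 : st10s ω σ Y Z [a, b, d]
        = σ a * (st10g ω σ Y Z b * symword σ [d]) := rfl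
    have h2 : st10t ω σ Y Z [a, b, d]
        = σ d * (st10g ω σ Y Z b * symword σ [a]) := rfl
    rw [h1, h2]
    unfold st10g
    simp only [st10symword_cons, st10symword_nil, smul_mul_assoc, mul_one]
    simp only [Algebra.smul_def]
    ring
  · -- w = a :: b :: (mid ++ [c, d])
    rw [List.concat_eq_append, show (mid ++ [c]) ++ [d] = mid ++ [c, d] by simp]
    rw [hγ.2 a b mid c d]
    have h1 : st10s ω σ Y Z (a :: b :: (mid ++ [c, d]))
        = σ a * (st10g ω σ Y Z b * symword σ (mid ++ [c, d])) := rfl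
    have h2 : st10t ω σ Y Z (a :: b :: (mid ++ [c, d]))
        = σ d * (st10g ω σ Y Z c * symword σ (mid.reverse ++ [b, a])) := by
      unfold st10t
      have : (a :: b :: (mid ++ [c, d])).reverse = d :: c :: (mid.reverse ++ [b, a]) := by
        simp
      rw [this, st10s_cons, st10f_cons]
    rw [h1, h2]
    unfold st10g
    have e1 : symword σ (mid ++ [c, d]) = symword σ mid * (σ c * (σ d * 1)) := by
      rw [st10symword_append]; simp [st10symword_cons, st10symword_nil]
    have e2 : symword σ (mid.reverse ++ [b, a]) = symword σ mid * (σ b * (σ a * 1)) := by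
      rw [st10symword_append, st10symword_reverse]; simp [st10symword_cons, st10symword_nil]
    have e3 : symword σ (a :: (mid ++ [c, d])) = σ a * (symword σ mid * (σ c * (σ d * 1))) := by
      rw [st10symword_cons, e1]
    have e4 : symword σ (a :: b :: (mid ++ [d])) = σ a * (σ b * (symword σ mid * (σ d * 1))) := by
      rw [st10symword_cons, st10symword_cons, st10symword_append]
      simp [st10symword_cons, st10symword_nil]
    rw [e1, e2, e3, e4]
    simp only [Algebra.smul_def]
    ring

/-- closed-form "leading value" -/
def st10Q (l : List H) : A :=
  match l.reverse with
  | v :: u :: r => symword σ r *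
      (st10g ω σ Y Z u * σ v - st10g ω σ Y Z v * σ u)
  | _ => 0

lemma st10Q_of_reverse (l : List H) (v u : H) (r : List H) (h : l.reverse = v :: u :: r) :
    st10Q ω σ Y Z l = symword σ r *
      (st10g ω σ Y Z u * σ v - st10g ω σ Y Z v * σ u) := by
  unfold st10Q
  rw [h]

lemma st10Q_pair (u v : H) :
    st10Q ω σ Y Z [u, v] = st10g ω σ Y Z u * σ v - st10g ω σ Y Z v * σ u := by
  rw [st10Q_of_reverse ω σ Y Z [u,v] v u [] (by simp), st10symword_nil, one_mul]

lemma st10Q_cons (x : H) (l : List H) (hl : 2 ≤ l.length) :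
    st10Q ω σ Y Z (x :: l) = σ x * st10Q ω σ Y Z l := by
  rcases l with _ | ⟨a, t⟩
  · simp at hl
  rcases (a :: t).reverse.eq_nil_or_concat with h | ⟨r1, u1, h⟩
  · simp at h
  rcases h1 : (a :: t).reverse with _ | ⟨v, r2⟩
  · simp at h1
  rcases r2 with _ | ⟨u, r⟩
  · -- reverse has length 1, contradiction with length ≥ 2
    have hlen := congrArg List.length h1
    simp only [List.length_reverse, List.length_cons, List.length_nil] at hlen
    simp only [List.length_cons] at hl
    omega
  rw [st10Q_of_reverse ω σ Y Z (a :: t) v u r h1]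
  rw [st10Q_of_reverse ω σ Y Z (x :: a :: t) v u (r ++ [x])
    (by rw [List.reverse_cons, h1]; simp)]
  rw [st10symword_append]
  simp [st10symword_cons, st10symword_nil]
  ring

/-- the four signed sums over the expansion -/
def st10Sf (l : List H) : A := ((st10expn l).map fun p => p.1 • st10f ω σ Y Z p.2).sum
def st10Sl (l : List H) : A := ((st10expn l).map fun p => p.1 • st10l ω σ Y Z p.2).sum
def st10Ss (l : List H) : A := ((st10expn l).map fun p => p.1 • st10s ω σ Y Z p.2).sum
def st10St (l : List H) : A := ((st10expn l).map fun p => p.1 • st10t ω σ Y Z p.2).sum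

end Stmt10Aux2

section Stmt10Aux3

set_option linter.unusedSectionVars false

variable (ω : H →ₗ[ℚ] H →ₗ[ℚ] ℚ) (σ : H →ₗ[ℚ] A) (Y Z : H)

lemma st10sum_split (F : List H → A) (x y z : H) (t : List H) :
    ((st10expn (x :: y :: z :: t)).map fun p => p.1 • F p.2).sum
      = ((st10expn (y :: z :: t)).map fun p => p.1 • F (x :: p.2)).sum
        + ((st10expn (y :: z :: t)).map fun p => -(p.1 • F (p.2 ++ [x]))).sum := by
  have h2 : st10expn (x :: y :: z :: t)
      = ((st10expn (y :: z :: t)).map fun p => (p.1, x :: p.2)) ++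
        ((st10expn (y :: z :: t)).map fun p => (-p.1, p.2 ++ [x])) := rfl
  rw [h2, List.map_append, List.map_map, List.map_map, List.sum_append]
  congr 1
  apply congrArg List.sum
  apply List.map_congr_left
  intro p _
  simp [Function.comp, neg_smul]

lemma st10len2 {m : List H} (p : ℚ × List H) (hp : p ∈ st10expn m) (hm : 2 ≤ m.length) :
    2 ≤ p.2.length := by
  rw [(st10expn_perm m p hp).length_eq]; exact hm

lemma st10Sf_cons (x y z : H) (t : List H) :
    st10Sf ω σ Y Z (x :: y :: z :: t) = -(σ x * st10Sf ω σ Y Z (y :: z :: t)) := by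
  unfold st10Sf
  rw [st10sum_split]
  have e1 : ((st10expn (y :: z :: t)).map fun p => p.1 • st10f ω σ Y Z (x :: p.2)).sum = 0 := by
    rw [List.map_congr_left (g := fun p : ℚ × List H =>
        p.1 • (st10g ω σ Y Z x * symword σ (y :: z :: t)))
      (fun p hp => by rw [st10f_cons, st10symword_perm σ (st10expn_perm _ p hp)])]
    rw [st10sum_smul, st10expn_fst, zero_smul]
  have e2 : ((st10expn (y :: z :: t)).map fun p => -(p.1 • st10f ω σ Y Z (p.2 ++ [x]))).sum
      = -(σ x * ((st10expn (y :: z :: t)).map fun p => p.1 • st10f ω σ Y Z p.2).sum) := by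
    rw [List.map_congr_left (g := fun p : ℚ × List H =>
        -(σ x * (p.1 • st10f ω σ Y Z p.2)))
      (fun p hp => by
        have hne : p.2 ≠ [] := by
          have := st10len2 p hp (by simp); intro h; rw [h] at this; simp at this
        rw [st10f_concat ω σ Y Z p.2 hne x]; simp [mul_smul_comm])]
    rw [st10sum_neg, List.sum_map_mul_left]
  rw [e1, e2, zero_add]

lemma st10Sl_cons (x y z : H) (t : List H) :
    st10Sl ω σ Y Z (x :: y :: z :: t) = σ x * st10Sl ω σ Y Z (y :: z :: t) := by
  unfold st10Sl
  rw [st10sum_split]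
  have e1 : ((st10expn (y :: z :: t)).map fun p => p.1 • st10l ω σ Y Z (x :: p.2)).sum
      = σ x * ((st10expn (y :: z :: t)).map fun p => p.1 • st10l ω σ Y Z p.2).sum := by
    rw [List.map_congr_left (g := fun p : ℚ × List H =>
        σ x * (p.1 • st10l ω σ Y Z p.2))
      (fun p hp => by
        have hne : p.2 ≠ [] := by
          have := st10len2 p hp (by simp); intro h; rw [h] at this; simp at this
        rw [st10l_cons ω σ Y Z x p.2 hne]; simp [mul_smul_comm])]
    rw [List.sum_map_mul_left]
  have e2 : ((st10expn (y :: z :: t)).map fun p => -(p.1 • st10l ω σ Y Z (p.2 ++ [x]))).sum = 0 := by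
    rw [List.map_congr_left (g := fun p : ℚ × List H =>
        -(p.1 • (st10g ω σ Y Z x * symword σ (y :: z :: t))))
      (fun p hp => by rw [st10l_concat, st10symword_perm σ (st10expn_perm _ p hp)])]
    rw [st10sum_neg, st10sum_smul, st10expn_fst, zero_smul, neg_zero]
  rw [e1, e2, add_zero]

lemma st10Ss_cons (x y z : H) (t : List H) :
    st10Ss ω σ Y Z (x :: y :: z :: t)
      = σ x * st10Sf ω σ Y Z (y :: z :: t) - σ x * st10Ss ω σ Y Z (y :: z :: t) := by
  unfold st10Ss st10Sf
  rw [st10sum_split]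
  have e1 : ((st10expn (y :: z :: t)).map fun p => p.1 • st10s ω σ Y Z (x :: p.2)).sum
      = σ x * ((st10expn (y :: z :: t)).map fun p => p.1 • st10f ω σ Y Z p.2).sum := by
    rw [List.map_congr_left (g := fun p : ℚ × List H =>
        σ x * (p.1 • st10f ω σ Y Z p.2))
      (fun p _ => by rw [st10s_cons]; simp [mul_smul_comm])]
    rw [List.sum_map_mul_left]
  have e2 : ((st10expn (y :: z :: t)).map fun p => -(p.1 • st10s ω σ Y Z (p.2 ++ [x]))).sum
      = -(σ x * ((st10expn (y :: z :: t)).map fun p => p.1 • st10s ω σ Y Z p.2).sum) := by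
    rw [List.map_congr_left (g := fun p : ℚ × List H =>
        -(σ x * (p.1 • st10s ω σ Y Z p.2)))
      (fun p hp => by
        rw [st10s_concat ω σ Y Z p.2 (st10len2 p hp (by simp)) x]; simp [mul_smul_comm])]
    rw [st10sum_neg, List.sum_map_mul_left]
  rw [e1, e2, sub_eq_add_neg]

lemma st10St_cons (x y z : H) (t : List H) :
    st10St ω σ Y Z (x :: y :: z :: t)
      = σ x * st10St ω σ Y Z (y :: z :: t) - σ x * st10Sl ω σ Y Z (y :: z :: t) := by
  unfold st10St st10Sl
  rw [st10sum_split]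
  have e1 : ((st10expn (y :: z :: t)).map fun p => p.1 • st10t ω σ Y Z (x :: p.2)).sum
      = σ x * ((st10expn (y :: z :: t)).map fun p => p.1 • st10t ω σ Y Z p.2).sum := by
    rw [List.map_congr_left (g := fun p : ℚ × List H =>
        σ x * (p.1 • st10t ω σ Y Z p.2))
      (fun p hp => by
        rw [st10t_cons ω σ Y Z x p.2 (st10len2 p hp (by simp))]; simp [mul_smul_comm])]
    rw [List.sum_map_mul_left]
  have e2 : ((st10expn (y :: z :: t)).map fun p => -(p.1 • st10t ω σ Y Z (p.2 ++ [x]))).sum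
      = -(σ x * ((st10expn (y :: z :: t)).map fun p => p.1 • st10l ω σ Y Z p.2).sum) := by
    rw [List.map_congr_left (g := fun p : ℚ × List H =>
        -(σ x * (p.1 • st10l ω σ Y Z p.2)))
      (fun p _ => by rw [st10t_concat]; simp [mul_smul_comm])]
    rw [st10sum_neg, List.sum_map_mul_left]
  rw [e1, e2, sub_eq_add_neg]

lemma st10closed (l : List H) :
    2 ≤ l.length →
    st10Sf ω σ Y Z l = ((-1 : ℚ) ^ l.length) • st10Q ω σ Y Z l ∧
    st10Sl ω σ Y Z l = -st10Q ω σ Y Z l ∧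
    st10Ss ω σ Y Z l = (((-1 : ℚ) ^ l.length) * (1 - (l.length : ℚ))) • st10Q ω σ Y Z l ∧
    st10St ω σ Y Z l = ((l.length : ℚ) - 1) • st10Q ω σ Y Z l := by
  induction l using st10expn.induct with
  | case1 => intro hl; simp at hl
  | case2 x => intro hl; simp at hl
  | case3 x y t ih =>
    intro _
    rcases t with _ | ⟨z, t⟩
    · -- base case [x, y]
      have hE : st10expn [x, y] = [(1, [x, y]), (-1, [y, x])] := rfl
      have hQ := st10Q_pair ω σ Y Z x y
      refine ⟨?_, ?_, ?_, ?_⟩ <;>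
      · simp only [st10Sf, st10Sl, st10Ss, st10St]
        rw [hE]
        simp only [List.map_cons, List.map_nil, List.sum_cons, List.sum_nil, add_zero,
          List.length_cons, List.length_nil]
        rw [hQ]
        simp only [st10f, st10l, st10s, st10t, List.reverse_cons, List.reverse_nil,
          List.nil_append, List.singleton_append, st10symword_cons, st10symword_nil]
        simp only [Algebra.smul_def, map_mul, map_pow, map_sub, map_neg, map_one,
          map_natCast]
        push_cast
        ring
    · -- step case x :: (y :: z :: t)
      have hm : 2 ≤ (y :: z :: t).length := by simp
      obtain ⟨hSf, hSl, hSs, hSt⟩ := ih hm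
      have hQc := st10Q_cons ω σ Y Z x (y :: z :: t) hm
      refine ⟨?_, ?_, ?_, ?_⟩
      · rw [st10Sf_cons, hSf, hQc, mul_smul_comm, ← neg_smul]
        simp only [List.length_cons]
        congr 1
        rw [pow_succ]
        ring
      · rw [st10Sl_cons, hSl, hQc, mul_neg]
      · rw [st10Ss_cons, hSs, hSf, hQc, mul_smul_comm, mul_smul_comm, ← sub_smul]
        simp only [List.length_cons]
        congr 1
        push_cast
        rw [pow_succ]
        ring
      · rw [st10St_cons, hSt, hSl, hQc, mul_smul_comm, mul_neg, sub_neg_eq_add]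
        have hc : ((↑(x :: y :: z :: t).length : ℚ) - 1)
            = ((↑(y :: z :: t).length : ℚ) - 1) + 1 := by
          simp only [List.length_cons]; push_cast; ring
        rw [hc, add_smul, one_smul]

end Stmt10Aux3

/-- Lemma (Kawazumi–Kuno): if `m ≥ 3`, then
`γ(Φ(X1 X2 ⋯ Xm)) = −(m−1)·β(Φ(X1 X2 ⋯ Xm))` in `Sym^m(H)`. -/
theorem stmt10 (ω : H →ₗ[ℚ] H →ₗ[ℚ] ℚ) (hω : ∀ x, ω x x = 0)
    (σ : H →ₗ[ℚ] A) (Y Z : H)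
    (β : TensorAlgebra ℚ H →ₗ[ℚ] A) (hβ : IsBeta ω σ Y Z β)
    (γ : TensorAlgebra ℚ H →ₗ[ℚ] A) (hγ : IsGamma ω σ Y Z γ)
    (l : List H) (hl : 3 ≤ l.length) :
    γ (dynkin l) = (-((l.length : ℚ) - 1)) • β (dynkin l) := by
  have hl2 : 2 ≤ l.length := by omega
  obtain ⟨hSf, hSl, hSs, hSt⟩ := st10closed ω σ Y Z l hl2
  have hβd : β (dynkin l) = st10Sf ω σ Y Z l + st10Sl ω σ Y Z l := by
    rw [st10dynkin_eq, map_list_sum, List.map_map]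
    unfold st10Sf st10Sl
    rw [← st10sum_add]
    apply congrArg List.sum
    apply List.map_congr_left
    intro p hp
    have hlen := (st10expn_perm l p hp).length_eq
    simp only [Function.comp_apply, map_smul]
    rw [st10beta_word ω σ Y Z β hβ p.2 (by omega), smul_add]
  have hγd : γ (dynkin l) = st10Ss ω σ Y Z l + st10St ω σ Y Z l := by
    rw [st10dynkin_eq, map_list_sum, List.map_map]
    unfold st10Ss st10St
    rw [← st10sum_add]
    apply congrArg List.sum
    apply List.map_congr_left
    intro p hp
    have hlen := (st10expn_perm l p hp).length_eq
    simp only [Function.comp_apply, map_smul]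
    rw [st10gamma_word ω σ Y Z γ hγ p.2 (by omega), smul_add]
  rw [hβd, hγd, hSf, hSl, hSs, hSt]
  rw [smul_add, smul_smul, smul_neg, ← neg_smul, ← add_smul, ← add_smul]
  congr 1
  ring

end
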